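/- (Uniqueness of causal solutions on a small rectangle.) Let (q⁽¹⁾,P⁽¹⁾,D⁽¹⁾) and (q⁽²⁾,P⁽²⁾,D⁽²⁾) be two C¹ solutions of the Maxwell–Bloch system q_z = −P, P_t = −2qD, D_t = 2Re(conj(q)P) on a rectangle [t₀,t₁]×[z₀,z₁] ⊂ [0,∞)², each satisfying the a priori bounds |P⁽ʲ⁾| ≤ 1, |D⁽ʲ⁾| ≤ 1, |q⁽ʲ⁾(t,z)| ≤ |q₀(t)| + z for a fixed q₀ ∈ L¹. Suppose q⁽¹⁾(t,z₀) = q⁽²⁾(t,z₀) for t ∈ [t₀,t₁], and P⁽¹⁾(t₀,z) = P⁽²⁾(t₀,z), D⁽¹⁾(t₀,z) = D⁽²⁾(t₀,z) for z ∈ [z₀,z₁]. If (z₁−z₀) + 4(t₁−t₀) + 4[∫_{t₀}^{t₁}|q₀(τ)|dτ + z₁(t₁−t₀)] < 1, then the two solutions coincide on all of [t₀,t₁]×[z₀,z₁]. -/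

import Mathlib

/-!
Let `S_q`, `S_P`, `S_D` be the maxima of `|Δq|`, `|ΔP|`, `|ΔD|` over the rectangle. Integrating
`Δq_z = −ΔP` in `z` from the edge `z₀` gives `S_q ≤ (z₁ − z₀) S_P`. Integrating the Bloch equations
in `t` from `t₀`, after splitting `q₁D₁ − q₂D₂ = (Δq) D₁ + q₂ (ΔD)` (and likewise for `conj(q) P`)
and using `|P|, |D| ≤ 1`, `|q(t,z)| ≤ |q₀(t)| + z₁`, gives `S_P ≤ 2(t₁ − t₀) S_q + 2 M S_D` and
`S_D ≤ 2(t₁ − t₀) S_q + 2 M S_P` with `M = ∫_{t₀}^{t₁} (|q₀| + z₁)`. Summing,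
`S ≤ [(z₁ − z₀) + 4(t₁ − t₀) + 4M] S` for `S = S_q + S_P + S_D`, and the bracket is `< 1`.
-/

open MeasureTheory Set

/-- `(q, P, D)` is a C¹ solution of the Maxwell–Bloch system
`q_z = −P`, `P_t = −2qD`, `D_t = 2Re(conj(q)·P)` on the rectangle
`[t₀,t₁] × [z₀,z₁]`. -/
def MBSolOn (t₀ t₁ z₀ z₁ : ℝ) (q P : ℝ → ℝ → ℂ) (D : ℝ → ℝ → ℝ) : Prop :=
  ContinuousOn (fun p : ℝ × ℝ => q p.1 p.2) (Set.Icc t₀ t₁ ×ˢ Set.Icc z₀ z₁) ∧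
  ContinuousOn (fun p : ℝ × ℝ => P p.1 p.2) (Set.Icc t₀ t₁ ×ˢ Set.Icc z₀ z₁) ∧
  ContinuousOn (fun p : ℝ × ℝ => D p.1 p.2) (Set.Icc t₀ t₁ ×ˢ Set.Icc z₀ z₁) ∧
  (∀ t ∈ Set.Icc t₀ t₁, ∀ z ∈ Set.Icc z₀ z₁,
    HasDerivWithinAt (fun z' => q t z') (-(P t z)) (Set.Icc z₀ z₁) z ∧
    HasDerivWithinAt (fun t' => P t' z) (-2 * q t z * (D t z : ℂ)) (Set.Icc t₀ t₁) t ∧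
    HasDerivWithinAt (fun t' => D t' z) (2 * ((starRingEnd ℂ) (q t z) * P t z).re)
      (Set.Icc t₀ t₁) t)

theorem norm_mul_sub_mul_le_add_mul {R : Type*} [NonUnitalSeminormedRing R] {a₁ a₂ b₁ b₂ : R}
    {A B Q : ℝ} (ha : ‖a₁ - a₂‖ ≤ A) (hb₁ : ‖b₁‖ ≤ 1) (ha₂ : ‖a₂‖ ≤ Q) (hb : ‖b₁ - b₂‖ ≤ B) :
    ‖a₁ * b₁ - a₂ * b₂‖ ≤ A + B * Q := by
  calc ‖a₁ * b₁ - a₂ * b₂‖ = ‖(a₁ - a₂) * b₁ + a₂ * (b₁ - b₂)‖ := by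
        rw [sub_mul, mul_sub]; abel_nf
    _ ≤ ‖a₁ - a₂‖ * ‖b₁‖ + ‖a₂‖ * ‖b₁ - b₂‖ :=
        (norm_add_le _ _).trans (add_le_add (norm_mul_le _ _) (norm_mul_le _ _))
    _ ≤ A * 1 + Q * B := by
        gcongr
        · exact (norm_nonneg _).trans ha
        · exact (norm_nonneg _).trans ha₂
    _ = A + B * Q := by ring

theorem exists_forall_norm_sub_le_eq_of_continuousOn_Icc_prod {E : Type*}
    [SeminormedAddCommGroup E] {f g : ℝ → ℝ → E} {a b c d : ℝ} (hab : a ≤ b) (hcd : c ≤ d)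
    (hf : ContinuousOn (fun p : ℝ × ℝ => f p.1 p.2) (Icc a b ×ˢ Icc c d))
    (hg : ContinuousOn (fun p : ℝ × ℝ => g p.1 p.2) (Icc a b ×ˢ Icc c d)) :
    ∃ S, (∀ t ∈ Icc a b, ∀ z ∈ Icc c d, ‖f t z - g t z‖ ≤ S) ∧
      ∃ t ∈ Icc a b, ∃ z ∈ Icc c d, ‖f t z - g t z‖ = S := by
  obtain ⟨p, hp, hmax⟩ := (isCompact_Icc.prod isCompact_Icc).exists_isMaxOn
    ⟨(a, c), left_mem_Icc.2 hab, left_mem_Icc.2 hcd⟩ (hf.sub hg).norm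
  exact ⟨_, fun t ht z hz => hmax (mk_mem_prod ht hz), p.1, hp.1, p.2, hp.2, rfl⟩

theorem eq_zero_of_mutual_bounds {x y w a b m : ℝ} (hx : 0 ≤ x) (hy : 0 ≤ y) (hw : 0 ≤ w)
    (ha : 0 ≤ a) (hb : 0 ≤ b) (hm : 0 ≤ m) (hxy : x ≤ y * a)
    (hyx : y ≤ 2 * x * b + 2 * w * m) (hwx : w ≤ 2 * x * b + 2 * y * m)
    (hsmall : a + 4 * b + 4 * m < 1) : x = 0 ∧ y = 0 ∧ w = 0 := by
  have hsum : x + y + w ≤ (a + 4 * b + 4 * m) * (x + y + w) := by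
    nlinarith [mul_nonneg ha hx, mul_nonneg ha hw, mul_nonneg hb hy, mul_nonneg hb hw,
      mul_nonneg hm hx]
  have hzero : x + y + w ≤ 0 := by nlinarith
  exact ⟨by linarith, by linarith, by linarith⟩

section FTC

variable {E : Type*} [NormedAddCommGroup E] [NormedSpace ℝ E] [CompleteSpace E]
  {f f' : ℝ → E} {a b t : ℝ}

theorem norm_sub_le_integral_of_norm_hasDerivWithinAt_le {G : ℝ → ℝ}
    (hf : ∀ x ∈ Icc a b, HasDerivWithinAt f (f' x) (Icc a b) x)
    (hf' : IntervalIntegrable f' volume a b) (hG : IntervalIntegrable G volume a b)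
    (hbound : ∀ x ∈ Icc a b, ‖f' x‖ ≤ G x) (ht : t ∈ Icc a b) :
    ‖f t - f a‖ ≤ ∫ x in a..b, G x := by
  have hsub : Icc a t ⊆ Icc a b := Icc_subset_Icc_right ht.2
  have huIcc : uIcc a t ⊆ uIcc a b := by
    rwa [uIcc_of_le ht.1, uIcc_of_le (ht.1.trans ht.2)]
  have hftc : ∫ x in a..t, f' x = f t - f a :=
    intervalIntegral.integral_eq_sub_of_hasDeriv_right_of_le ht.1
      (fun x hx => (hf x (hsub hx)).continuousWithinAt.mono hsub)
      (fun x hx => ((hf x ⟨hx.1.le, hx.2.le.trans ht.2⟩).hasDerivAt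
        (Icc_mem_nhds hx.1 (hx.2.trans_le ht.2))).hasDerivWithinAt)
      (hf'.mono_set huIcc)
  calc ‖f t - f a‖ = ‖∫ x in a..t, f' x‖ := by rw [hftc]
    _ ≤ ∫ x in a..t, ‖f' x‖ := intervalIntegral.norm_integral_le_integral_norm ht.1
    _ ≤ ∫ x in a..t, G x := intervalIntegral.integral_mono_on ht.1
        (hf'.mono_set huIcc).norm (hG.mono_set huIcc) fun x hx => hbound x (hsub hx)
    _ ≤ ∫ x in a..b, G x := intervalIntegral.integral_mono_interval le_rfl ht.1 ht.2
        ((ae_restrict_iff' measurableSet_Ioc).2 (Filter.Eventually.of_forall fun x hx =>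
          (norm_nonneg _).trans (hbound x ⟨hx.1.le, hx.2⟩))) hG

theorem norm_le_of_norm_hasDerivWithinAt_le_add_mul {Q : ℝ → ℝ} {α β : ℝ}
    (hf₀ : f a = 0) (hf : ∀ x ∈ Icc a b, HasDerivWithinAt f (f' x) (Icc a b) x)
    (hf' : IntervalIntegrable f' volume a b) (hQ : IntervalIntegrable Q volume a b)
    (hbound : ∀ x ∈ Icc a b, ‖f' x‖ ≤ α + β * Q x) (ht : t ∈ Icc a b) :
    ‖f t‖ ≤ α * (b - a) + β * ∫ x in a..b, Q x := by
  have h := norm_sub_le_integral_of_norm_hasDerivWithinAt_le hf hf'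
    (intervalIntegrable_const.add (hQ.const_mul β)) hbound ht
  rwa [hf₀, sub_zero, intervalIntegral.integral_add intervalIntegrable_const (hQ.const_mul β),
    intervalIntegral.integral_const, intervalIntegral.integral_const_mul, smul_eq_mul,
    mul_comm (b - a)] at h

end FTC

namespace MBSolOn

variable {t₀ t₁ z₀ z₁ : ℝ} {q1 P1 q2 P2 : ℝ → ℝ → ℂ} {D1 D2 : ℝ → ℝ → ℝ}

theorem norm_q_sub_le (hsol1 : MBSolOn t₀ t₁ z₀ z₁ q1 P1 D1)
    (hsol2 : MBSolOn t₀ t₁ z₀ z₁ q2 P2 D2) {SP : ℝ}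
    (hq_edge : ∀ t ∈ Icc t₀ t₁, q1 t z₀ = q2 t z₀)
    (hP : ∀ t ∈ Icc t₀ t₁, ∀ z ∈ Icc z₀ z₁, ‖P1 t z - P2 t z‖ ≤ SP) :
    ∀ t ∈ Icc t₀ t₁, ∀ z ∈ Icc z₀ z₁, ‖q1 t z - q2 t z‖ ≤ SP * (z₁ - z₀) := by
  intro t ht z hz
  have h := (convex_Icc z₀ z₁).norm_image_sub_le_of_norm_hasDerivWithin_le
    (f := fun z' => q1 t z' - q2 t z')
    (fun x hx => (hsol1.2.2.2 t ht x hx).1.sub (hsol2.2.2.2 t ht x hx).1)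
    (fun x hx => by rw [neg_sub_neg, norm_sub_rev]; exact hP t ht x hx)
    (left_mem_Icc.2 (hz.1.trans hz.2)) hz
  rw [hq_edge t ht, sub_self, sub_zero, Real.norm_of_nonneg (sub_nonneg.2 hz.1)] at h
  exact h.trans (mul_le_mul_of_nonneg_left (by linarith [hz.2])
    ((norm_nonneg _).trans (hP t ht z hz)))

theorem norm_P_sub_le (hsol1 : MBSolOn t₀ t₁ z₀ z₁ q1 P1 D1)
    (hsol2 : MBSolOn t₀ t₁ z₀ z₁ q2 P2 D2) {Q : ℝ → ℝ} {Sq SD : ℝ}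
    (hQ : IntervalIntegrable Q volume t₀ t₁)
    (hD1 : ∀ t ∈ Icc t₀ t₁, ∀ z ∈ Icc z₀ z₁, |D1 t z| ≤ 1)
    (hq2 : ∀ t ∈ Icc t₀ t₁, ∀ z ∈ Icc z₀ z₁, ‖q2 t z‖ ≤ Q t)
    (hP_edge : ∀ z ∈ Icc z₀ z₁, P1 t₀ z = P2 t₀ z)
    (hq : ∀ t ∈ Icc t₀ t₁, ∀ z ∈ Icc z₀ z₁, ‖q1 t z - q2 t z‖ ≤ Sq)
    (hD : ∀ t ∈ Icc t₀ t₁, ∀ z ∈ Icc z₀ z₁, ‖D1 t z - D2 t z‖ ≤ SD) :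
    ∀ t ∈ Icc t₀ t₁, ∀ z ∈ Icc z₀ z₁,
      ‖P1 t z - P2 t z‖ ≤ 2 * Sq * (t₁ - t₀) + 2 * SD * ∫ t in t₀..t₁, Q t := by
  intro t ht z hz
  have hq1c := hsol1.1.uncurry_right (f := q1) z hz
  have hq2c := hsol2.1.uncurry_right (f := q2) z hz
  have hD1c := hsol1.2.2.1.uncurry_right (f := D1) z hz
  have hD2c := hsol2.2.2.1.uncurry_right (f := D2) z hz
  refine norm_le_of_norm_hasDerivWithinAt_le_add_mul (f := fun τ => P1 τ z - P2 τ z)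
    (by rw [hP_edge z hz, sub_self])
    (fun x hx => (hsol1.2.2.2 x hx z hz).2.1.sub (hsol2.2.2.2 x hx z hz).2.1)
    (ContinuousOn.intervalIntegrable_of_Icc (ht.1.trans ht.2) (by fun_prop)) hQ
    (fun x hx => ?_) ht
  have hD1x : ‖(D1 x z : ℂ)‖ ≤ 1 := by
    rw [Complex.norm_real, Real.norm_eq_abs]; exact hD1 x hx z hz
  have hΔD : ‖(D1 x z : ℂ) - D2 x z‖ ≤ SD := by
    rw [← Complex.ofReal_sub, Complex.norm_real]; exact hD x hx z hz
  have h := norm_mul_sub_mul_le_add_mul (hq x hx z hz) hD1x (hq2 x hx z hz) hΔD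
  calc ‖-2 * q1 x z * (D1 x z : ℂ) - -2 * q2 x z * (D2 x z : ℂ)‖
      = 2 * ‖q1 x z * (D1 x z : ℂ) - q2 x z * (D2 x z : ℂ)‖ := by
        rw [mul_assoc, mul_assoc, ← mul_sub, norm_mul, norm_neg, Complex.norm_two]
    _ ≤ 2 * Sq + 2 * SD * Q x := by linarith

theorem norm_D_sub_le (hsol1 : MBSolOn t₀ t₁ z₀ z₁ q1 P1 D1)
    (hsol2 : MBSolOn t₀ t₁ z₀ z₁ q2 P2 D2) {Q : ℝ → ℝ} {Sq SP : ℝ}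
    (hQ : IntervalIntegrable Q volume t₀ t₁)
    (hP1 : ∀ t ∈ Icc t₀ t₁, ∀ z ∈ Icc z₀ z₁, ‖P1 t z‖ ≤ 1)
    (hq2 : ∀ t ∈ Icc t₀ t₁, ∀ z ∈ Icc z₀ z₁, ‖q2 t z‖ ≤ Q t)
    (hD_edge : ∀ z ∈ Icc z₀ z₁, D1 t₀ z = D2 t₀ z)
    (hq : ∀ t ∈ Icc t₀ t₁, ∀ z ∈ Icc z₀ z₁, ‖q1 t z - q2 t z‖ ≤ Sq)
    (hP : ∀ t ∈ Icc t₀ t₁, ∀ z ∈ Icc z₀ z₁, ‖P1 t z - P2 t z‖ ≤ SP) :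
    ∀ t ∈ Icc t₀ t₁, ∀ z ∈ Icc z₀ z₁,
      ‖D1 t z - D2 t z‖ ≤ 2 * Sq * (t₁ - t₀) + 2 * SP * ∫ t in t₀..t₁, Q t := by
  intro t ht z hz
  have hq1c := hsol1.1.uncurry_right (f := q1) z hz
  have hq2c := hsol2.1.uncurry_right (f := q2) z hz
  have hP1c := hsol1.2.1.uncurry_right (f := P1) z hz
  have hP2c := hsol2.2.1.uncurry_right (f := P2) z hz
  refine norm_le_of_norm_hasDerivWithinAt_le_add_mul (f := fun τ => D1 τ z - D2 τ z)
    (by rw [hD_edge z hz, sub_self])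
    (fun x hx => (hsol1.2.2.2 x hx z hz).2.2.sub (hsol2.2.2.2 x hx z hz).2.2)
    (ContinuousOn.intervalIntegrable_of_Icc (ht.1.trans ht.2) (by fun_prop)) hQ
    (fun x hx => ?_) ht
  have hΔq : ‖starRingEnd ℂ (q1 x z) - starRingEnd ℂ (q2 x z)‖ ≤ Sq := by
    rw [← map_sub, Complex.norm_conj]; exact hq x hx z hz
  have hq2x : ‖starRingEnd ℂ (q2 x z)‖ ≤ Q x := by
    rw [Complex.norm_conj]; exact hq2 x hx z hz
  have h := norm_mul_sub_mul_le_add_mul hΔq (hP1 x hx z hz) hq2x (hP x hx z hz)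
  set w₁ := starRingEnd ℂ (q1 x z) * P1 x z
  set w₂ := starRingEnd ℂ (q2 x z) * P2 x z
  calc ‖2 * w₁.re - 2 * w₂.re‖ = 2 * |(w₁ - w₂).re| := by
        rw [Complex.sub_re, ← mul_sub, Real.norm_eq_abs, abs_mul, abs_two]
    _ ≤ 2 * Sq + 2 * SP * Q x := by linarith [Complex.abs_re_le_norm (w₁ - w₂)]

end MBSolOn

theorem stmt19_general
    (t₀ t₁ z₀ z₁ : ℝ) (ht : t₀ < t₁) (hz : z₀ < z₁)
    (q₀ : ℝ → ℂ) (hq₀ : Integrable q₀)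
    (q1 P1 : ℝ → ℝ → ℂ) (D1 : ℝ → ℝ → ℝ) (q2 P2 : ℝ → ℝ → ℂ) (D2 : ℝ → ℝ → ℝ)
    (hsol1 : MBSolOn t₀ t₁ z₀ z₁ q1 P1 D1) (hsol2 : MBSolOn t₀ t₁ z₀ z₁ q2 P2 D2)
    (hbd1 : ∀ t ∈ Icc t₀ t₁, ∀ z ∈ Icc z₀ z₁,
      ‖P1 t z‖ ≤ 1 ∧ |D1 t z| ≤ 1 ∧
        ‖q1 t z‖ ≤ ‖q₀ t‖ + z)
    (hbd2 : ∀ t ∈ Icc t₀ t₁, ∀ z ∈ Icc z₀ z₁,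
      ‖P2 t z‖ ≤ 1 ∧ |D2 t z| ≤ 1 ∧
        ‖q2 t z‖ ≤ ‖q₀ t‖ + z)
    (hq_edge : ∀ t ∈ Icc t₀ t₁, q1 t z₀ = q2 t z₀)
    (hPD_edge : ∀ z ∈ Icc z₀ z₁, P1 t₀ z = P2 t₀ z ∧ D1 t₀ z = D2 t₀ z)
    (hsmall : (z₁ - z₀) + 4 * (t₁ - t₀) +
        4 * ((∫ τ in t₀..t₁, ‖q₀ τ‖) + z₁ * (t₁ - t₀)) < 1) :
    ∀ t ∈ Icc t₀ t₁, ∀ z ∈ Icc z₀ z₁,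
      q1 t z = q2 t z ∧ P1 t z = P2 t z ∧ D1 t z = D2 t z := by
  have hq₀' : IntervalIntegrable (fun τ => ‖q₀ τ‖) volume t₀ t₁ := hq₀.norm.intervalIntegrable
  have hQ : IntervalIntegrable (fun τ => ‖q₀ τ‖ + z₁) volume t₀ t₁ :=
    hq₀'.add intervalIntegrable_const
  have hq2 : ∀ t ∈ Icc t₀ t₁, ∀ z ∈ Icc z₀ z₁, ‖q2 t z‖ ≤ ‖q₀ t‖ + z₁ := fun t ht z hz =>
    (hbd2 t ht z hz).2.2.trans (by linarith [hz.2])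
  have hM : ∫ τ in t₀..t₁, ‖q₀ τ‖ + z₁ = (∫ τ in t₀..t₁, ‖q₀ τ‖) + z₁ * (t₁ - t₀) := by
    rw [intervalIntegral.integral_add hq₀' intervalIntegrable_const,
      intervalIntegral.integral_const, smul_eq_mul, mul_comm]
  have hM₀ : 0 ≤ ∫ τ in t₀..t₁, ‖q₀ τ‖ + z₁ := intervalIntegral.integral_nonneg ht.le
    fun τ hτ => (norm_nonneg _).trans (hq2 τ hτ z₀ (left_mem_Icc.2 hz.le))
  obtain ⟨Sq, hq, tq, htq, zq, hzq, rfl⟩ :=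
    exists_forall_norm_sub_le_eq_of_continuousOn_Icc_prod ht.le hz.le hsol1.1 hsol2.1
  obtain ⟨SP, hP, tP, htP, zP, hzP, rfl⟩ :=
    exists_forall_norm_sub_le_eq_of_continuousOn_Icc_prod ht.le hz.le hsol1.2.1 hsol2.2.1
  obtain ⟨SD, hD, tD, htD, zD, hzD, rfl⟩ :=
    exists_forall_norm_sub_le_eq_of_continuousOn_Icc_prod ht.le hz.le hsol1.2.2.1 hsol2.2.2.1
  obtain ⟨hq0, hP0, hD0⟩ := eq_zero_of_mutual_bounds (norm_nonneg _) (norm_nonneg _)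
    (norm_nonneg _) (sub_nonneg.2 hz.le) (sub_nonneg.2 ht.le) hM₀
    (hsol1.norm_q_sub_le hsol2 hq_edge hP tq htq zq hzq)
    (hsol1.norm_P_sub_le hsol2 hQ (fun t ht z hz => (hbd1 t ht z hz).2.1) hq2
      (fun z hz => (hPD_edge z hz).1) hq hD tP htP zP hzP)
    (hsol1.norm_D_sub_le hsol2 hQ (fun t ht z hz => (hbd1 t ht z hz).1) hq2
      (fun z hz => (hPD_edge z hz).2) hq hP tD htD zD hzD)
    (by rwa [hM])
  intro t ht z hz
  exact ⟨sub_eq_zero.1 (norm_le_zero_iff.1 (hq0 ▸ hq t ht z hz)),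
    sub_eq_zero.1 (norm_le_zero_iff.1 (hP0 ▸ hP t ht z hz)),
    sub_eq_zero.1 (norm_le_zero_iff.1 (hD0 ▸ hD t ht z hz))⟩

/-- Uniqueness of causal solutions on a small rectangle: two solutions of the
Maxwell–Bloch system with the a priori bounds `|P| ≤ 1`, `|D| ≤ 1`,
`|q(t,z)| ≤ |q₀(t)| + z`, agreeing on the edges `z = z₀` (for `q`) and `t = t₀`
(for `P` and `D`), coincide on the whole rectangle provided
`(z₁−z₀) + 4(t₁−t₀) + 4[∫_{t₀}^{t₁}|q₀| + z₁(t₁−t₀)] < 1`. -/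
theorem stmt19
    (t₀ t₁ z₀ z₁ : ℝ) (ht0 : 0 ≤ t₀) (ht : t₀ < t₁) (hz0 : 0 ≤ z₀) (hz : z₀ < z₁)
    (q₀ : ℝ → ℂ) (hq₀ : Integrable q₀)
    (q1 P1 : ℝ → ℝ → ℂ) (D1 : ℝ → ℝ → ℝ) (q2 P2 : ℝ → ℝ → ℂ) (D2 : ℝ → ℝ → ℝ)
    (hsol1 : MBSolOn t₀ t₁ z₀ z₁ q1 P1 D1) (hsol2 : MBSolOn t₀ t₁ z₀ z₁ q2 P2 D2)
    (hbd1 : ∀ t ∈ Icc t₀ t₁, ∀ z ∈ Icc z₀ z₁,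
      ‖P1 t z‖ ≤ 1 ∧ |D1 t z| ≤ 1 ∧
        ‖q1 t z‖ ≤ ‖q₀ t‖ + z)
    (hbd2 : ∀ t ∈ Icc t₀ t₁, ∀ z ∈ Icc z₀ z₁,
      ‖P2 t z‖ ≤ 1 ∧ |D2 t z| ≤ 1 ∧
        ‖q2 t z‖ ≤ ‖q₀ t‖ + z)
    (hq_edge : ∀ t ∈ Icc t₀ t₁, q1 t z₀ = q2 t z₀)
    (hPD_edge : ∀ z ∈ Icc z₀ z₁, P1 t₀ z = P2 t₀ z ∧ D1 t₀ z = D2 t₀ z)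
    (hsmall : (z₁ - z₀) + 4 * (t₁ - t₀) +
        4 * ((∫ τ in t₀..t₁, ‖q₀ τ‖) + z₁ * (t₁ - t₀)) < 1) :
    ∀ t ∈ Icc t₀ t₁, ∀ z ∈ Icc z₀ z₁,
      q1 t z = q2 t z ∧ P1 t z = P2 t z ∧ D1 t z = D2 t z :=
  stmt19_general t₀ t₁ z₀ z₁ ht hz q₀ hq₀ q1 P1 D1 q2 P2 D2 hsol1 hsol2 hbd1 hbd2 hq_edge hPD_edge
    hsmall
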